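/- Let f : ℝ^d → ℝ be twice continuously differentiable with L2-Lipschitz Hessian (L2 > 0), and let ε₂ ∈ (0,1). Let H be a symmetric d×d matrix with ‖H − ∇²f(x)‖₂ ≤ ε₃ where 0 ≤ ε₃ ≤ ε₂/24, and let g ∈ ℝ^d satisfy ‖g − ∇f(x)‖ ≤ ε₄ with 0 ≤ ε₄ ≤ ε₂²/(24·L2). Let v be a unit vector and set x⁺ = x − (ε₂/L2)·sign(vᵀg)·v. Then f(x) − f(x⁺) ≥ −(ε₂²/(2·L2²))·vᵀHv − 11·ε₂³/(48·L2²). -/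

import Mathlib

open scoped RealInnerProductSpace

noncomputable def sgn (t : ℝ) : ℝ := if 0 ≤ t then 1 else -1

/-!
A Lipschitz Hessian gives the cubic Taylor bound
`f (x + p) ≤ f x + ⟪∇f x, p⟫ + ⟪∇²f x p, p⟫ / 2 + L ‖p‖³ / 6`, obtained by comparing
`t ↦ f (x + t p)` with its Taylor polynomial twice. For the step `p = -(ε₂/L) sgn⟪g, v⟫ v`
the sign makes the first-order term at most `(ε₂/L) ‖g - ∇f x‖`, and the second-order term
is `(ε₂/L)² ⟪∇²f x v, v⟫ ≤ (ε₂/L)² (⟪H v, v⟫ + ‖H - ∇²f x‖)`. The three error terms are then at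
most `ε₂³/L²` times `1/24`, `1/48` and `1/6`, which add up to `11/48`.
-/

open Set

theorem image_le_of_hasDerivAt_le {φ φ' B B' : ℝ → ℝ} {a b : ℝ}
    (hφ : ∀ s, HasDerivAt φ (φ' s) s) (hB : ∀ s, HasDerivAt B (B' s) s) (ha : φ a ≤ B a)
    (hle : ∀ s ∈ Ico a b, φ' s ≤ B' s) (hab : a ≤ b) : φ b ≤ B b :=
  image_le_of_deriv_right_le_deriv_boundary (fun s _ => (hφ s).continuousAt.continuousWithinAt)
    (fun s _ => (hφ s).hasDerivWithinAt) ha (fun s _ => (hB s).continuousAt.continuousWithinAt)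
    (fun s _ => (hB s).hasDerivWithinAt) hle ⟨hab, le_rfl⟩

theorem image_le_taylor_of_deriv2_le {φ φ' φ'' : ℝ → ℝ} {K t : ℝ}
    (hφ : ∀ s, HasDerivAt φ (φ' s) s) (hφ' : ∀ s, HasDerivAt φ' (φ'' s) s)
    (hK : ∀ s ∈ Ico 0 t, φ'' s ≤ φ'' 0 + K * s) (ht : 0 ≤ t) :
    φ t ≤ φ 0 + φ' 0 * t + φ'' 0 / 2 * t ^ 2 + K / 6 * t ^ 3 := by
  have hφ'_le : ∀ s ∈ Icc 0 t, φ' s ≤ φ' 0 + φ'' 0 * s + K / 2 * s ^ 2 := by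
    refine fun s hs => image_le_of_hasDerivAt_le
      (B := fun r => φ' 0 + φ'' 0 * r + K / 2 * r ^ 2) hφ' (fun r => ?_) (by simp)
      (fun r hr => hK r ⟨hr.1, hr.2.trans_le hs.2⟩) hs.1
    exact ((((hasDerivAt_id' r).const_mul (φ'' 0)).const_add (φ' 0)).add
      ((hasDerivAt_pow 2 r).const_mul (K / 2))).congr_deriv (by push_cast; ring)
  refine image_le_of_hasDerivAt_le
    (B := fun r => φ 0 + φ' 0 * r + φ'' 0 / 2 * r ^ 2 + K / 6 * r ^ 3) hφ (fun r => ?_) (by simp)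
    (fun s hs => hφ'_le s (Ico_subset_Icc_self hs)) ht
  exact (((((hasDerivAt_id' r).const_mul (φ' 0)).const_add (φ 0)).add
    ((hasDerivAt_pow 2 r).const_mul (φ'' 0 / 2))).add
    ((hasDerivAt_pow 3 r).const_mul (K / 6))).congr_deriv (by push_cast; ring)

theorem sgn_mul_self (t : ℝ) : sgn t * t = |t| := by
  unfold sgn
  split_ifs with h
  · simp [abs_of_nonneg h]
  · simp [abs_of_neg (not_le.mp h)]

theorem abs_sgn (t : ℝ) : |sgn t| = 1 := by
  unfold sgn
  split_ifs <;> simp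

section

variable {E : Type*} [NormedAddCommGroup E] [InnerProductSpace ℝ E]

theorem neg_sgn_inner_mul_inner_le (g G v : E) :
    -(sgn ⟪g, v⟫ * ⟪G, v⟫) ≤ ‖g - G‖ * ‖v‖ := by
  have hsplit : sgn ⟪g, v⟫ * ⟪G, v⟫ = |⟪g, v⟫| - sgn ⟪g, v⟫ * ⟪g - G, v⟫ := by
    rw [inner_sub_left, ← sgn_mul_self]; ring
  have herr : sgn ⟪g, v⟫ * ⟪g - G, v⟫ ≤ ‖g - G‖ * ‖v‖ := by
    refine (le_abs_self _).trans ?_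
    rw [abs_mul, abs_sgn, one_mul]
    exact abs_real_inner_le_norm _ _
  linarith [abs_nonneg ⟪g, v⟫]

theorem inner_apply_self_le_add_norm_sub (A B : E →L[ℝ] E) (v : E) :
    ⟪B v, v⟫ ≤ ⟪A v, v⟫ + ‖A - B‖ * ‖v‖ ^ 2 := by
  have := calc -⟪(A - B) v, v⟫ ≤ ‖(A - B) v‖ * ‖v‖ :=
        (neg_le_abs _).trans (abs_real_inner_le_norm _ _)
    _ ≤ ‖A - B‖ * ‖v‖ * ‖v‖ := by gcongr; exact (A - B).le_opNorm v
  rw [sub_apply, inner_sub_left] at this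
  linarith

variable [CompleteSpace E] {f : E → ℝ}

theorem ContDiff.gradient {n m : WithTop ℕ∞} (hf : ContDiff ℝ n f) (hmn : m + 1 ≤ n) :
    ContDiff ℝ m (gradient f) :=
  (InnerProductSpace.toDual ℝ E).symm.contDiff.comp (hf.fderiv_right hmn)

theorem le_taylor_of_lipschitz_hessian (hf : Differentiable ℝ f)
    (hG : Differentiable ℝ (gradient f)) {L : ℝ} (x p : E)
    (hL : ∀ y, ‖fderiv ℝ (gradient f) y - fderiv ℝ (gradient f) x‖ ≤ L * ‖y - x‖) :
    f (x + p) ≤ f x + ⟪gradient f x, p⟫ + ⟪fderiv ℝ (gradient f) x p, p⟫ / 2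
      + L * ‖p‖ ^ 3 / 6 := by
  have hline (t : ℝ) : HasDerivAt (fun s : ℝ => x + s • p) p t := by
    simpa using ((hasDerivAt_id t).smul_const p).const_add x
  have hφ (t : ℝ) : HasDerivAt (fun s => f (x + s • p)) ⟪gradient f (x + t • p), p⟫ t := by
    simpa [Function.comp_def, inner_gradient_left] using
      (hf (x + t • p)).hasFDerivAt.comp_hasDerivAt t (hline t)
  have hφ' (t : ℝ) : HasDerivAt (fun s => ⟪gradient f (x + s • p), p⟫)
      ⟪fderiv ℝ (gradient f) (x + t • p) p, p⟫ t := by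
    simpa using ((hG (x + t • p)).hasFDerivAt.comp_hasDerivAt t (hline t)).inner ℝ
      (hasDerivAt_const t p)
  have hK (t : ℝ) (ht : t ∈ Ico (0 : ℝ) 1) :
      ⟪fderiv ℝ (gradient f) (x + t • p) p, p⟫
        ≤ ⟪fderiv ℝ (gradient f) (x + (0 : ℝ) • p) p, p⟫ + L * ‖p‖ ^ 3 * t := by
    set A := fderiv ℝ (gradient f) (x + t • p) - fderiv ℝ (gradient f) x
    have hA : ‖A‖ ≤ L * (t * ‖p‖) := by
      simpa [norm_smul, abs_of_nonneg ht.1] using hL (x + t • p)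
    have := calc ⟪A p, p⟫ ≤ ‖A p‖ * ‖p‖ := real_inner_le_norm _ _
      _ ≤ ‖A‖ * ‖p‖ * ‖p‖ := by gcongr; exact A.le_opNorm p
      _ ≤ L * (t * ‖p‖) * ‖p‖ * ‖p‖ := by gcongr
    simp only [A, sub_apply, inner_sub_left] at this
    simp only [zero_smul, add_zero]
    linarith
  simpa using image_le_taylor_of_deriv2_le hφ hφ' hK zero_le_one

theorem negative_curvature_step_le (hf : Differentiable ℝ f)
    (hG : Differentiable ℝ (gradient f)) {L η : ℝ} (hη : 0 ≤ η) (x g v : E) (H : E →L[ℝ] E)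
    (hv : ‖v‖ = 1)
    (hL : ∀ y, ‖fderiv ℝ (gradient f) y - fderiv ℝ (gradient f) x‖ ≤ L * ‖y - x‖) :
    f (x - (η * sgn ⟪g, v⟫) • v) ≤ f x + η ^ 2 / 2 * ⟪H v, v⟫ + η * ‖g - gradient f x‖
      + η ^ 2 / 2 * ‖H - fderiv ℝ (gradient f) x‖ + L * η ^ 3 / 6 := by
  set p := -(η * sgn ⟪g, v⟫) • v
  have hp : x - (η * sgn ⟪g, v⟫) • v = x + p := by rw [sub_eq_add_neg, ← neg_smul]
  have hnorm : ‖p‖ = η := by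
    rw [norm_smul, hv, Real.norm_eq_abs, abs_neg, abs_mul, abs_sgn, abs_of_nonneg hη]; ring
  have hgrad : ⟪gradient f x, p⟫ ≤ η * ‖g - gradient f x‖ := by
    have := mul_le_mul_of_nonneg_left (neg_sgn_inner_mul_inner_le g (gradient f x) v) hη
    rw [hv, mul_one] at this
    rw [real_inner_smul_right]
    linarith
  have hhess : ⟪fderiv ℝ (gradient f) x p, p⟫
      ≤ η ^ 2 * (⟪H v, v⟫ + ‖H - fderiv ℝ (gradient f) x‖) := by
    have hsq : (η * sgn ⟪g, v⟫) ^ 2 = η ^ 2 := by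
      rw [mul_pow, ← sq_abs (sgn _), abs_sgn, one_pow, mul_one]
    have := inner_apply_self_le_add_norm_sub H (fderiv ℝ (gradient f) x) v
    rw [hv, one_pow, mul_one] at this
    calc ⟪fderiv ℝ (gradient f) x p, p⟫
          = (η * sgn ⟪g, v⟫) ^ 2 * ⟪fderiv ℝ (gradient f) x v, v⟫ := by
          simp only [p, map_smul, real_inner_smul_left, real_inner_smul_right]; ring
      _ ≤ η ^ 2 * (⟪H v, v⟫ + ‖H - fderiv ℝ (gradient f) x‖) := by rw [hsq]; gcongr
  have htaylor := le_taylor_of_lipschitz_hessian hf hG x p hL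
  rw [hnorm] at htaylor
  rw [hp]
  linarith

end

theorem stochastic_negative_curvature_step_decrease_general {d : ℕ}
    (f : EuclideanSpace ℝ (Fin d) → ℝ) (L2 ε₂ ε₃ ε₄ : ℝ)
    (hL2 : 0 < L2) (hε₂ : 0 < ε₂)
    (hε₃ : ε₃ ≤ ε₂ / 24)
    (hε₄ : ε₄ ≤ ε₂ ^ 2 / (24 * L2))
    (hf : ContDiff ℝ 2 f)
    (hHlip : ∀ a b : EuclideanSpace ℝ (Fin d),
      ‖fderiv ℝ (gradient f) a - fderiv ℝ (gradient f) b‖ ≤ L2 * ‖a - b‖)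
    (x : EuclideanSpace ℝ (Fin d))
    (H : EuclideanSpace ℝ (Fin d) →L[ℝ] EuclideanSpace ℝ (Fin d))
    (hHapprox : ‖H - fderiv ℝ (gradient f) x‖ ≤ ε₃)
    (g : EuclideanSpace ℝ (Fin d)) (hg : ‖g - gradient f x‖ ≤ ε₄)
    (v : EuclideanSpace ℝ (Fin d)) (hv : ‖v‖ = 1)
    (xp : EuclideanSpace ℝ (Fin d))
    (hxp : xp = x - ((ε₂ / L2) * sgn ⟪g, v⟫) • v) :
    f x - f xp ≥ -(ε₂ ^ 2 / (2 * L2 ^ 2)) * ⟪H v, v⟫ - 11 * ε₂ ^ 3 / (48 * L2 ^ 2) := by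
  set η := ε₂ / L2 with hη_def
  have hη : 0 ≤ η := by positivity
  have hstep := negative_curvature_step_le (hf.differentiable two_ne_zero)
    ((hf.gradient le_rfl).differentiable one_ne_zero) hη x g v H hv (fun y => hHlip y x)
  have hgrad : η * ‖g - gradient f x‖ ≤ ε₂ ^ 3 / (24 * L2 ^ 2) := calc
    η * ‖g - gradient f x‖ ≤ η * (ε₂ ^ 2 / (24 * L2)) := by gcongr; exact hg.trans hε₄
    _ = ε₂ ^ 3 / (24 * L2 ^ 2) := by rw [hη_def]; field_simp
  have hhess : η ^ 2 / 2 * ‖H - fderiv ℝ (gradient f) x‖ ≤ ε₂ ^ 3 / (48 * L2 ^ 2) := calc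
    _ ≤ η ^ 2 / 2 * (ε₂ / 24) := by gcongr; exact hHapprox.trans hε₃
    _ = ε₂ ^ 3 / (48 * L2 ^ 2) := by rw [hη_def]; field_simp; ring
  have hcubic : L2 * η ^ 3 / 6 = ε₂ ^ 3 / (6 * L2 ^ 2) := by rw [hη_def]; field_simp
  have hquad : η ^ 2 / 2 = ε₂ ^ 2 / (2 * L2 ^ 2) := by rw [hη_def]; field_simp
  rw [hcubic, ← hxp] at hstep
  rw [hquad] at hstep hhess
  have h11 : 11 * ε₂ ^ 3 / (48 * L2 ^ 2) =
      ε₂ ^ 3 / (24 * L2 ^ 2) + ε₂ ^ 3 / (48 * L2 ^ 2) + ε₂ ^ 3 / (6 * L2 ^ 2) := by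
    field_simp; ring
  linarith

/-- objective decrease of a stochastic negative-curvature step using an
inexact Hessian `H` (error `ε₃ ≤ ε₂/24`) and an inexact gradient `g`
(error `ε₄ ≤ ε₂²/(24·L2)`). -/
theorem stochastic_negative_curvature_step_decrease {d : ℕ}
    (f : EuclideanSpace ℝ (Fin d) → ℝ) (L2 ε₂ ε₃ ε₄ : ℝ)
    (hL2 : 0 < L2) (hε₂ : 0 < ε₂) (hε₂1 : ε₂ < 1)
    (hε₃0 : 0 ≤ ε₃) (hε₃ : ε₃ ≤ ε₂ / 24)
    (hε₄0 : 0 ≤ ε₄) (hε₄ : ε₄ ≤ ε₂ ^ 2 / (24 * L2))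
    (hf : ContDiff ℝ 2 f)
    (hHlip : ∀ a b : EuclideanSpace ℝ (Fin d),
      ‖fderiv ℝ (gradient f) a - fderiv ℝ (gradient f) b‖ ≤ L2 * ‖a - b‖)
    (x : EuclideanSpace ℝ (Fin d))
    (H : EuclideanSpace ℝ (Fin d) →L[ℝ] EuclideanSpace ℝ (Fin d))
    (hHsym : ∀ u w : EuclideanSpace ℝ (Fin d), ⟪H u, w⟫ = ⟪u, H w⟫)
    (hHapprox : ‖H - fderiv ℝ (gradient f) x‖ ≤ ε₃)
    (g : EuclideanSpace ℝ (Fin d)) (hg : ‖g - gradient f x‖ ≤ ε₄)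
    (v : EuclideanSpace ℝ (Fin d)) (hv : ‖v‖ = 1)
    (xp : EuclideanSpace ℝ (Fin d))
    (hxp : xp = x - ((ε₂ / L2) * sgn ⟪g, v⟫) • v) :
    f x - f xp ≥ -(ε₂ ^ 2 / (2 * L2 ^ 2)) * ⟪H v, v⟫ - 11 * ε₂ ^ 3 / (48 * L2 ^ 2) :=
  stochastic_negative_curvature_step_decrease_general f L2 ε₂ ε₃ ε₄ hL2 hε₂ hε₃ hε₄ hf hHlip x H
    hHapprox g hg v hv xp hxp
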